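/- For every s ∈ [0,1/2] there exist a positive semidefinite matrix R on ℂ³⊗ℂ³ and a density matrix ρ on ℂ³ such that ρ⊗I₃ − T_b(R) and ρ⊗I₃ + T_b(R) are positive semidefinite and Tr(R·J^s) = 1 + √(1−s). (This exhibits a feasible point of the Wang–Fang–Duan semidefinite program showing Γ(N_s) ≥ 1 + √(1−s); one may take ρ = ½(|0⟩⟨0| + |2⟩⟨2|) and R = ½(|00⟩⟨00| + |01⟩⟨01| + |01⟩⟨22| + |22⟩⟨01| + |22⟩⟨22|).) -/

import Mathlib

open Matrix Kronecker ComplexOrder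

/-- Partial transpose on the second tensor factor. -/
noncomputable def ptransposeB {m n : ℕ}
    (M : Matrix (Fin m × Fin n) (Fin m × Fin n) ℂ) :
    Matrix (Fin m × Fin n) (Fin m × Fin n) ℂ :=
  Matrix.of fun p q => M (p.1, q.2) (q.1, p.2)

/-- |ψ₁⟩ = √s |0⟩⊗|0⟩ + |1⟩⊗|2⟩. -/
noncomputable def psi1 (s : ℝ) : Fin 3 × Fin 3 → ℂ := fun p =>
  if p = (0, 0) then (Real.sqrt s : ℂ) else if p = (1, 2) then 1 else 0

/-- |ψ₂⟩ = √(1−s) |0⟩⊗|1⟩ + |2⟩⊗|2⟩. -/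
noncomputable def psi2 (s : ℝ) : Fin 3 × Fin 3 → ℂ := fun p =>
  if p = (0, 1) then (Real.sqrt (1 - s) : ℂ) else if p = (2, 2) then 1 else 0

/-- The unnormalized Choi operator J^s = |ψ₁⟩⟨ψ₁| + |ψ₂⟩⟨ψ₂| of the channel N_s. -/
noncomputable def choiNs (s : ℝ) : Matrix (Fin 3 × Fin 3) (Fin 3 × Fin 3) ℂ :=
  Matrix.vecMulVec (psi1 s) (star (psi1 s)) + Matrix.vecMulVec (psi2 s) (star (psi2 s))

/-!
The witness is `R = ½(|00⟩⟨00| + |v⟩⟨v|)` with `v = |01⟩ + |22⟩` and `ρ = ½(|0⟩⟨0| + |2⟩⟨2|)`.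
Both `ρ ⊗ I ∓ T_b(R)` are sums of rank-one projectors:
`ρ ⊗ I − T_b(R) = ½(|w₋⟩⟨w₋| + |20⟩⟨20|)` and
`ρ ⊗ I + T_b(R) = ½(|w₊⟩⟨w₊| + |20⟩⟨20|) + |00⟩⟨00| + |01⟩⟨01| + |22⟩⟨22|`, where `w± = |02⟩ ± |21⟩`.
Since `Tr(|a⟩⟨a| |b⟩⟨b|) = |⟨a|b⟩|²`, the objective is
`½(|⟨00|ψ₁⟩|² + |⟨v|ψ₂⟩|²) = ½(s + (1 + √(1−s))²) = 1 + √(1−s)`.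
-/

section KetBra

variable {n : Type*}

def ketBra {R : Type*} [Mul R] [Star R] (v : n → R) : Matrix n n R := vecMulVec v (star v)

variable [Fintype n]

theorem trace_ketBra_mul_ketBra {R : Type*} [CommSemiring R] [StarRing R] (a b : n → R) :
    (ketBra a * ketBra b).trace = (star a ⬝ᵥ b) * star (star a ⬝ᵥ b) := by
  rw [ketBra, ketBra, vecMulVec_mul_vecMulVec, trace_vecMulVec, dotProduct_smul, smul_eq_mul,
    dotProduct_comm a, star_dotProduct (v := b) (w := a)]

theorem posSemidef_ketBra (v : n → ℂ) : (ketBra v).PosSemidef :=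
  posSemidef_vecMulVec_self_star v

theorem posSemidef_half_smul_ketBra_add_ketBra (u v : n → ℂ) :
    ((2⁻¹ : ℂ) • (ketBra u + ketBra v)).PosSemidef :=
  ((posSemidef_ketBra u).add (posSemidef_ketBra v)).smul (by positivity)

end KetBra

noncomputable def ket (i j : Fin 3) : Fin 3 × Fin 3 → ℂ := Pi.single (i, j) 1

noncomputable def witnessR : Matrix (Fin 3 × Fin 3) (Fin 3 × Fin 3) ℂ :=
  (2⁻¹ : ℂ) • (ketBra (ket 0 0) + ketBra (ket 0 1 + ket 2 2))

noncomputable def witnessRho : Matrix (Fin 3) (Fin 3) ℂ :=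
  (2⁻¹ : ℂ) • (ketBra (Pi.single 0 1) + ketBra (Pi.single 2 1))

theorem trace_witnessRho : witnessRho.trace = 1 := by
  simp [witnessRho, ketBra, trace_vecMulVec]
  norm_num

theorem witnessRho_kronecker_one_sub_ptransposeB :
    witnessRho ⊗ₖ (1 : Matrix (Fin 3) (Fin 3) ℂ) - ptransposeB witnessR =
      (2⁻¹ : ℂ) • (ketBra (ket 0 2 - ket 2 1) + ketBra (ket 2 0)) := by
  ext ⟨i, j⟩ ⟨k, l⟩
  fin_cases i <;> fin_cases j <;> fin_cases k <;> fin_cases l <;>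
    simp [witnessRho, witnessR, ptransposeB, ketBra, ket, vecMulVec_apply, one_apply,
      Pi.single_apply]

set_option maxHeartbeats 1000000 in
theorem witnessRho_kronecker_one_add_ptransposeB :
    witnessRho ⊗ₖ (1 : Matrix (Fin 3) (Fin 3) ℂ) + ptransposeB witnessR =
      (2⁻¹ : ℂ) • (ketBra (ket 0 2 + ket 2 1) + ketBra (ket 2 0)) +
        ketBra (ket 0 0) + ketBra (ket 0 1) + ketBra (ket 2 2) := by
  ext ⟨i, j⟩ ⟨k, l⟩
  fin_cases i <;> fin_cases j <;> fin_cases k <;> fin_cases l <;>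
    simp [witnessRho, witnessR, ptransposeB, ketBra, ket, vecMulVec_apply, one_apply,
      Pi.single_apply] <;>
    norm_num

theorem trace_witnessR_mul_choiNs {s : ℝ} (hs₀ : 0 ≤ s) (hs₁ : s ≤ 1) :
    (witnessR * choiNs s).trace = ((1 + Real.sqrt (1 - s) : ℝ) : ℂ) := by
  have h₁ : star (ket 0 0) ⬝ᵥ psi1 s = Real.sqrt s := by simp [ket, psi1]
  have h₂ : star (ket 0 0) ⬝ᵥ psi2 s = 0 := by simp [ket, psi2]
  have h₃ : star (ket 0 1 + ket 2 2) ⬝ᵥ psi1 s = 0 := by simp [ket, psi1, add_dotProduct]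
  have h₄ : star (ket 0 1 + ket 2 2) ⬝ᵥ psi2 s = Real.sqrt (1 - s) + 1 := by
    simp [ket, psi2, add_dotProduct]
  have hJ : choiNs s = ketBra (psi1 s) + ketBra (psi2 s) := rfl
  rw [witnessR, hJ, smul_mul, trace_smul, add_mul, mul_add, mul_add, trace_add, trace_add,
    trace_add, trace_ketBra_mul_ketBra, trace_ketBra_mul_ketBra, trace_ketBra_mul_ketBra,
    trace_ketBra_mul_ketBra, h₁, h₂, h₃, h₄]
  have hs : (Real.sqrt s : ℂ) ^ 2 = s := by exact_mod_cast Real.sq_sqrt hs₀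
  have hs' : (Real.sqrt (1 - s) : ℂ) ^ 2 = 1 - s := by
    rw [← Complex.ofReal_pow, Real.sq_sqrt (by linarith)]
    push_cast
    rfl
  simp only [star_zero, mul_zero, add_zero, zero_add, smul_eq_mul, star_add, star_one,
    Complex.star_def, Complex.conj_ofReal]
  push_cast
  linear_combination (2⁻¹ : ℂ) * (hs + hs')

theorem stmt0 (s : ℝ) (hs : s ∈ Set.Icc (0 : ℝ) (1/2)) :
    ∃ (R : Matrix (Fin 3 × Fin 3) (Fin 3 × Fin 3) ℂ) (ρ : Matrix (Fin 3) (Fin 3) ℂ),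
      R.PosSemidef ∧ ρ.PosSemidef ∧ ρ.trace = 1 ∧
      (ρ ⊗ₖ (1 : Matrix (Fin 3) (Fin 3) ℂ) - ptransposeB R).PosSemidef ∧
      (ρ ⊗ₖ (1 : Matrix (Fin 3) (Fin 3) ℂ) + ptransposeB R).PosSemidef ∧
      (R * choiNs s).trace = ((1 + Real.sqrt (1 - s) : ℝ) : ℂ) := by
  obtain ⟨hs₀, hs₁⟩ := hs
  refine ⟨witnessR, witnessRho, posSemidef_half_smul_ketBra_add_ketBra _ _,
    posSemidef_half_smul_ketBra_add_ketBra _ _, trace_witnessRho, ?_, ?_,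
    trace_witnessR_mul_choiNs hs₀ (by linarith)⟩
  · rw [witnessRho_kronecker_one_sub_ptransposeB]
    exact posSemidef_half_smul_ketBra_add_ketBra _ _
  · rw [witnessRho_kronecker_one_add_ptransposeB]
    exact (((posSemidef_half_smul_ketBra_add_ketBra _ _).add (posSemidef_ketBra _)).add
      (posSemidef_ketBra _)).add (posSemidef_ketBra _)
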